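/- Define b(a) = (a − 1)√((a + 2)/(3a)) and γ(a) = a + i·b(a) for a > 0. Then for every a > 0, Im( i( −γ(a) + γ(a)³/3 ) ) = −2/3. -/

import Mathlib

/-- `b(a) = (a − 1)√((a + 2)/(3a))`. -/
noncomputable def bb (a : ℝ) : ℝ := (a - 1) * Real.sqrt ((a + 2) / (3 * a))

/-- The steepest descent contour `γ(a) = a + i b(a)` through the critical point `s₀ = 1`
of `f(s) = i(−s + s³/3)`. -/
noncomputable def γ (a : ℝ) : ℂ := (a : ℂ) + (bb a : ℂ) * Complex.I

theorem Complex.re_pow_three (s : ℂ) : (s ^ 3).re = s.re ^ 3 - 3 * s.re * s.im ^ 2 := by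
  simp only [pow_succ, pow_zero, one_mul, Complex.mul_re, Complex.mul_im]
  ring

@[simp]
theorem γ_re (a : ℝ) : (γ a).re = a := by simp [γ]

@[simp]
theorem γ_im (a : ℝ) : (γ a).im = bb a := by simp [γ]

theorem mul_bb_sq {a : ℝ} (ha : 0 < a) : a * bb a ^ 2 = (a - 1) ^ 2 * (a + 2) / 3 := by
  rw [bb, mul_pow, Real.sq_sqrt (by positivity)]
  field_simp

/-- Along the contour `γ`, the imaginary part of `f(s) = i(−s + s³/3)` is constantly
equal to `−2/3`. -/
theorem im_const_on_contour (a : ℝ) (ha : 0 < a) :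
    (Complex.I * (-γ a + γ a ^ 3 / 3)).im = -2/3 := by
  rw [Complex.I_mul_im, Complex.add_re, Complex.neg_re, Complex.div_ofNat_re,
    Complex.re_pow_three, γ_re, γ_im, mul_assoc 3, mul_bb_sq ha]
  ring
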